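/- arXiv:1709.05035 — 2 statements merged into one kernel-verified Lean document; each statement's English description precedes it below -/
import Mathlib

section
/- Let n ≥ 2, let λ, ν ∈ ℂ with ν − λ a nonnegative integer, and let I ⊆ {1, …, n−1} with #I = i. Then (x_n² − Σ_{k=1}^{n−1} ε_I(k) x_k²)·𝒦_{λ−1,ν+1} = 4(ν − i)·𝒦_{λ,ν} − 8 (Σ_{k ∈ I} ∂_k²) 𝒦_{λ+1,ν−1} as tempered distributions on ℝ^n. -/
/-!
Both sides pair the coefficients of renormalized Gegenbauer polynomials with the numbers
`∂_nᵐ Δ'ᵏ ψ(0)`. On smooth functions `[∂_j, x_j] = 1`, hence `[Δ', x_j] = 2 ∂_j` for `j < n` and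
`[Δ', x_n] = 0`. Moving the multiplications by `x_j` to the left of `∂_nᵐ Δ'ᵏ`, where they vanish
at the origin, expresses `∂_nᵐ Δ'ᵏ((x_n² − Σ ε_I(k) x_k²) φ)(0)` through `∂_n^{m−2} Δ'ᵏ φ(0)`,
`∂_nᵐ Δ'^{k−1} φ(0)` and `∂_nᵐ Δ'^{k−2} (Σ_{k∈I} ∂_k²) φ(0)`. After reindexing, the three
resulting sums recombine into `𝒦_{λ,ν}` and `𝒦_{λ+1,ν−1}` by the two recurrences
`(k+1) a_{k+1}(α−1, l+2) = −a_k(α, l)` and `(l+2−2k)(l+1−2k) a_k(α−1, l+2) = 4(α+l−k) a_k(α, l)`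
for the coefficients `a_k(α, l)` of `C̃_l^α`.
-/

noncomputable def pd {n : ℕ} (p : Fin n) (f : (Fin n → ℝ) → ℂ) : (Fin n → ℝ) → ℂ :=
  fun x => fderiv ℝ f x (Pi.single p 1)

noncomputable def lapP {n : ℕ} (f : (Fin n → ℝ) → ℂ) : (Fin n → ℝ) → ℂ :=
  fun x => ∑ j ∈ Finset.univ.filter (fun j : Fin n => (j : ℕ) < n - 1), pd j (pd j f) x

noncomputable def pdLast {n : ℕ} (f : (Fin n → ℝ) → ℂ) : (Fin n → ℝ) → ℂ :=
  if h : 0 < n then pd ⟨n - 1, by omega⟩ f else 0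

noncomputable def gegenCoeff (α : ℂ) (l k : ℕ) : ℂ :=
  (-1 : ℂ) ^ k * (∏ m ∈ Finset.Ico ((l + 1) / 2) (l - k), (α + (m : ℂ))) *
    2 ^ (l - 2 * k) / ((Nat.factorial k : ℂ) * (Nat.factorial (l - 2 * k) : ℂ))

noncomputable def Kact (n : ℕ) (lam : ℂ) (l : ℤ) (φ : (Fin n → ℝ) → ℂ) : ℂ :=
  if 0 ≤ l then
    ∑ k ∈ Finset.range (l.toNat / 2 + 1),
      gegenCoeff (lam - ((n : ℂ) - 1) / 2) l.toNat k *
        ((-1 : ℂ) ^ k * ((-1 : ℂ) ^ (l.toNat - 2 * k) *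
          (pdLast (n := n))^[l.toNat - 2 * k] ((lapP (n := n))^[k] φ) 0))
  else 0

noncomputable def gam (mu : ℂ) (a : ℕ) : ℂ := if a % 2 = 1 then 1 else mu + ((a / 2 : ℕ) : ℂ)

def epsSet {n : ℕ} (I : Finset (Fin n)) (k : Fin n) : ℝ := if k ∈ I then 1 else -1

open scoped ContDiff

noncomputable section

variable {n : ℕ} {f g : (Fin n → ℝ) → ℂ}

theorem pow_succ_mul_eq_mul_pow_add {R : Type*} [Semiring R] {T X C : R}
    (h : T * X = X * T + C) (hC : Commute T C) (k : ℕ) :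
    T ^ (k + 1) * X = X * T ^ (k + 1) + (k + 1) * C * T ^ k := by
  induction k with
  | zero => simp [h]
  | succ k ih =>
    have hcomm : T * ((k + 1 : R) * C * T ^ k) = (k + 1) * C * T ^ (k + 1) := by
      rw [← mul_assoc, ← mul_assoc, ← Nat.cast_succ, ((Nat.cast_commute _ T).symm).eq,
        mul_assoc _ T, hC.eq, pow_succ', mul_assoc, mul_assoc, mul_assoc]
    rw [pow_succ', mul_assoc, ih, mul_add, ← mul_assoc T X, h, hcomm]
    push_cast
    noncomm_ring

theorem pow_mul_eq_mul_pow_add {R : Type*} [Semiring R] {T X C : R}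
    (h : T * X = X * T + C) (hC : Commute T C) (k : ℕ) :
    T ^ k * X = X * T ^ k + k * C * T ^ (k - 1) := by
  rcases k with _ | k
  · simp
  · simpa using pow_succ_mul_eq_mul_pow_add h hC k

theorem ContDiff.pd (hf : ContDiff ℝ ∞ f) (p : Fin n) : ContDiff ℝ ∞ (pd p f) :=
  (ContinuousLinearMap.apply ℝ ℂ (Pi.single p 1 : Fin n → ℝ)).contDiff.comp
    (hf.fderiv_right le_rfl)

theorem pd_add (hf : Differentiable ℝ f) (hg : Differentiable ℝ g) (p : Fin n) :
    pd p (f + g) = pd p f + pd p g := by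
  ext x
  simp [pd, fderiv_add (hf x) (hg x)]

theorem pd_const_smul (hf : Differentiable ℝ f) (c : ℂ) (p : Fin n) :
    pd p (c • f) = c • pd p f := by
  ext x
  simp [pd, fderiv_const_smul (hf x) c]

theorem pd_mul (hf : Differentiable ℝ f) (hg : Differentiable ℝ g) (p : Fin n) :
    pd p (f * g) = pd p f * g + f * pd p g := by
  ext x
  rw [pd, fderiv_mul (hf x) (hg x)]
  simp only [add_apply, smul_apply, smul_eq_mul, Pi.add_apply, Pi.mul_apply, pd]
  ring

theorem pd_comm (hf : ContDiff ℝ ∞ f) (p q : Fin n) : pd p (pd q f) = pd q (pd p f) := by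
  ext x
  have hf' : Differentiable ℝ (fderiv ℝ f) :=
    (hf.fderiv_right (m := ∞) le_rfl).differentiable (by simp)
  have hsecond : ∀ a b : Fin n,
      pd a (pd b f) x = fderiv ℝ (fderiv ℝ f) x (Pi.single a 1) (Pi.single b 1) := by
    intro a b
    have hpd : pd b f = fun y => fderiv ℝ f y (Pi.single b 1) := rfl
    rw [pd, hpd, fderiv_clm_apply (hf' x) (differentiableAt_const _)]
    simp
  rw [hsecond, hsecond]
  have hsmooth : minSmoothness ℝ 2 ≤ ∞ := by
    rw [minSmoothness_of_isRCLikeNormedField]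
    exact WithTop.coe_le_coe.mpr le_top
  exact hf.contDiffAt.isSymmSndFDerivAt hsmooth _ _

def coord (j : Fin n) : (Fin n → ℝ) → ℂ := fun x => (x j : ℂ)

theorem contDiff_coord (j : Fin n) : ContDiff ℝ ∞ (coord j) :=
  (Complex.ofRealCLM.comp (ContinuousLinearMap.proj j : (Fin n → ℝ) →L[ℝ] ℝ)).contDiff

theorem differentiable_coord (j : Fin n) : Differentiable ℝ (coord j) :=
  (contDiff_coord j).differentiable (by simp)

@[simp] theorem coord_zero (j : Fin n) : coord j 0 = 0 := by
  simp [coord]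

theorem pd_coord (p j : Fin n) : pd p (coord j) = if p = j then 1 else 0 := by
  have hcoord : coord j = Complex.ofRealCLM.comp (ContinuousLinearMap.proj (R := ℝ) j) := rfl
  ext x
  rw [pd, hcoord, ContinuousLinearMap.fderiv]
  by_cases h : p = j
  · subst h; simp
  · simp [h, Ne.symm h]

def smoothFns (n : ℕ) : Submodule ℂ ((Fin n → ℝ) → ℂ) where
  carrier := {f | ContDiff ℝ ∞ f}
  add_mem' {_ _} (hf : ContDiff ℝ ∞ _) (hg : ContDiff ℝ ∞ _) := hf.add hg
  zero_mem' := (contDiff_const : ContDiff ℝ ∞ fun _ => (0 : ℂ))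
  smul_mem' c _ (hf : ContDiff ℝ ∞ _) := hf.const_smul c

theorem contDiff_smoothFns (f : smoothFns n) : ContDiff ℝ ∞ (f : (Fin n → ℝ) → ℂ) := f.2

theorem differentiable_smoothFns (f : smoothFns n) :
    Differentiable ℝ (f : (Fin n → ℝ) → ℂ) :=
  (contDiff_smoothFns f).differentiable (by simp)

def pdOp (p : Fin n) : Module.End ℂ (smoothFns n) where
  toFun f := ⟨pd p f, (contDiff_smoothFns f).pd p⟩
  map_add' f g := Subtype.ext (pd_add (differentiable_smoothFns f) (differentiable_smoothFns g) p)
  map_smul' c f := Subtype.ext (pd_const_smul (differentiable_smoothFns f) c p)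

def coordOp (j : Fin n) : Module.End ℂ (smoothFns n) where
  toFun f := ⟨coord j * f, (contDiff_coord j).mul (contDiff_smoothFns f)⟩
  map_add' _ _ := Subtype.ext (mul_add _ _ _)
  map_smul' c _ := Subtype.ext (mul_smul_comm c _ _)

def evalZero : smoothFns n →ₗ[ℂ] ℂ := (LinearMap.proj 0).comp (smoothFns n).subtype

@[simp] theorem coe_pdOp_apply (p : Fin n) (f : smoothFns n) :
    (pdOp p f : (Fin n → ℝ) → ℂ) = pd p f := rfl

@[simp] theorem coe_coordOp_apply (j : Fin n) (f : smoothFns n) :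
    (coordOp j f : (Fin n → ℝ) → ℂ) = coord j * f := rfl

@[simp] theorem evalZero_apply (f : smoothFns n) :
    evalZero f = (f : (Fin n → ℝ) → ℂ) 0 := rfl

theorem evalZero_coordOp (j : Fin n) (f : smoothFns n) : evalZero (coordOp j f) = 0 := by
  simp

theorem pdOp_mul_coordOp_self (p : Fin n) : pdOp p * coordOp p = coordOp p * pdOp p + 1 := by
  ext f x
  simp only [Module.End.mul_apply, LinearMap.add_apply, Module.End.one_apply, Submodule.coe_add,
    coe_pdOp_apply, coe_coordOp_apply, pd_mul (differentiable_coord p) (differentiable_smoothFns f),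
    pd_coord, if_pos, Pi.add_apply, Pi.mul_apply, Pi.one_apply]
  ring

theorem commute_pdOp_coordOp {p j : Fin n} (h : p ≠ j) : Commute (pdOp p) (coordOp j) := by
  ext f x
  simp [pd_mul (differentiable_coord j) (differentiable_smoothFns f), pd_coord, h]

theorem commute_pdOp_pdOp (p q : Fin n) : Commute (pdOp p) (pdOp q) := by
  ext f x
  simp [pd_comm (contDiff_smoothFns f)]

def tangentialIdx (n : ℕ) : Finset (Fin n) :=
  Finset.univ.filter (fun j : Fin n => (j : ℕ) < n - 1)

def lapOp : Module.End ℂ (smoothFns n) := ∑ j ∈ tangentialIdx n, pdOp j * pdOp j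

theorem coe_lapOp_apply (f : smoothFns n) : (lapOp f : (Fin n → ℝ) → ℂ) = lapP f := by
  ext x
  simp [lapOp, lapP, tangentialIdx]

theorem lapOp_mul_coordOp {j : Fin n} (hj : j ∈ tangentialIdx n) :
    lapOp * coordOp j = coordOp j * lapOp + 2 * pdOp j := by
  have hterm : ∀ q, pdOp q * pdOp q * coordOp j
      = coordOp j * (pdOp q * pdOp q) + if q = j then 2 * pdOp j else 0 := by
    intro q
    by_cases hq : q = j
    · subst hq
      simp only [if_true, mul_assoc, pdOp_mul_coordOp_self, mul_add, mul_one]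
      rw [← mul_assoc, pdOp_mul_coordOp_self]
      noncomm_ring
    · simp only [hq, if_false, add_zero, mul_assoc, (commute_pdOp_coordOp hq).eq]
      rw [← mul_assoc, (commute_pdOp_coordOp hq).eq, mul_assoc]
  simp only [lapOp, Finset.sum_mul, Finset.mul_sum, hterm, Finset.sum_add_distrib,
    Finset.sum_ite_eq', hj, if_true]

theorem commute_lapOp_coordOp {j : Fin n} (hj : j ∉ tangentialIdx n) :
    Commute lapOp (coordOp j) :=
  Commute.sum_left _ _ _ fun q hq =>
    have hqj : q ≠ j := fun h => hj (h ▸ hq)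
    (commute_pdOp_coordOp hqj).mul_left (commute_pdOp_coordOp hqj)

theorem commute_lapOp_pdOp (p : Fin n) : Commute lapOp (pdOp p) :=
  Commute.sum_left _ _ _ fun q _ =>
    (commute_pdOp_pdOp q p).mul_left (commute_pdOp_pdOp q p)

theorem evalZero_pdOp_pow_coordOp_self (p : Fin n) (m : ℕ) (g : smoothFns n) :
    evalZero ((pdOp p ^ m) (coordOp p g)) = m * evalZero ((pdOp p ^ (m - 1)) g) := by
  rw [← Module.End.mul_apply,
    pow_mul_eq_mul_pow_add (pdOp_mul_coordOp_self p) (Commute.one_right _) m]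
  simp [Module.End.natCast_apply]

theorem last_notMem_tangentialIdx (n : ℕ) : Fin.last n ∉ tangentialIdx (n + 1) := by
  simp [tangentialIdx]

theorem ne_last_of_mem_tangentialIdx {j : Fin (n + 1)} (hj : j ∈ tangentialIdx (n + 1)) :
    j ≠ Fin.last n :=
  fun h => last_notMem_tangentialIdx n (h ▸ hj)

def derivAtZero (m k : ℕ) : smoothFns (n + 1) →ₗ[ℂ] ℂ :=
  evalZero ∘ₗ (pdOp (Fin.last n) ^ m * lapOp ^ k)

theorem derivAtZero_lapOp (m k : ℕ) (g : smoothFns (n + 1)) :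
    derivAtZero m k (lapOp g) = derivAtZero m (k + 1) g := by
  simp [derivAtZero, pow_succ]

theorem derivAtZero_coordOp_last (m k : ℕ) (g : smoothFns (n + 1)) :
    derivAtZero m k (coordOp (Fin.last n) g) = m * derivAtZero (m - 1) k g := by
  have hcomm := (commute_lapOp_coordOp (last_notMem_tangentialIdx n)).pow_left k
  simp only [derivAtZero, LinearMap.comp_apply, Module.End.mul_apply]
  rw [← Module.End.mul_apply (lapOp ^ k), hcomm.eq, Module.End.mul_apply,
    evalZero_pdOp_pow_coordOp_self]

theorem derivAtZero_coordOp {j : Fin (n + 1)} (hj : j ∈ tangentialIdx (n + 1)) (m k : ℕ)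
    (g : smoothFns (n + 1)) :
    derivAtZero m k (coordOp j g) = 2 * k * derivAtZero m (k - 1) (pdOp j g) := by
  have hPX := (commute_pdOp_coordOp (ne_last_of_mem_tangentialIdx hj).symm).pow_left m
  have hLD := (commute_lapOp_pdOp j).pow_left (k - 1)
  have hop : pdOp (Fin.last n) ^ m * lapOp ^ k * coordOp j
      = coordOp j * (pdOp (Fin.last n) ^ m * lapOp ^ k)
        + pdOp (Fin.last n) ^ m
          * ((k : Module.End ℂ (smoothFns (n + 1))) * (2 * pdOp j) * lapOp ^ (k - 1)) := by
    rw [mul_assoc, pow_mul_eq_mul_pow_add (lapOp_mul_coordOp hj)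
      ((Commute.ofNat_right _ 2).mul_right (commute_lapOp_pdOp j)) k, mul_add, ← mul_assoc,
      hPX.eq, mul_assoc]
  simp only [derivAtZero, LinearMap.comp_apply]
  rw [← Module.End.mul_apply, hop]
  simp only [LinearMap.add_apply, Module.End.mul_apply, map_add, evalZero_coordOp, zero_add,
    Module.End.natCast_apply, Module.End.ofNat_apply, map_nsmul]
  rw [← Module.End.mul_apply (pdOp j), ← hLD.eq]
  simp only [Module.End.mul_apply, evalZero_apply, nsmul_eq_mul, Nat.cast_ofNat]
  ring

theorem derivAtZero_coordOp_last_sq (m k : ℕ) (g : smoothFns (n + 1)) :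
    derivAtZero m k (coordOp (Fin.last n) (coordOp (Fin.last n) g))
      = m * (m - 1 : ℕ) * derivAtZero (m - 2) k g := by
  rw [derivAtZero_coordOp_last, derivAtZero_coordOp_last, Nat.sub_sub, mul_assoc]

theorem derivAtZero_coordOp_sq {j : Fin (n + 1)} (hj : j ∈ tangentialIdx (n + 1)) (m k : ℕ)
    (g : smoothFns (n + 1)) :
    derivAtZero m k (coordOp j (coordOp j g))
      = 2 * k * derivAtZero m (k - 1) g
        + 4 * k * (k - 1 : ℕ) * derivAtZero m (k - 2) (pdOp j (pdOp j g)) := by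
  rw [derivAtZero_coordOp hj, ← Module.End.mul_apply, pdOp_mul_coordOp_self,
    LinearMap.add_apply, Module.End.mul_apply, map_add, derivAtZero_coordOp hj, Nat.sub_sub,
    Module.End.one_apply]
  ring

theorem sum_epsSet_mul {I S : Finset (Fin n)} (hIS : I ⊆ S) (b : Fin n → ℂ) :
    ∑ j ∈ S, (epsSet I j : ℂ) * b j = 2 * ∑ j ∈ I, b j - ∑ j ∈ S, b j := by
  have hε : ∀ j, (epsSet I j : ℂ) * b j = 2 * (if j ∈ I then b j else 0) - b j := by
    intro j
    by_cases hj : j ∈ I <;> simp only [epsSet, hj, if_true, if_false] <;> push_cast <;> ring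
  simp only [hε, Finset.sum_sub_distrib, ← Finset.mul_sum, Finset.sum_ite_mem,
    Finset.inter_eq_right.mpr hIS]

theorem card_tangentialIdx (n : ℕ) : (tangentialIdx (n + 1)).card = n := by
  rw [tangentialIdx, Nat.add_sub_cancel, Fin.card_filter_val_lt]
  omega

def quadFormOp (I : Finset (Fin (n + 1))) : Module.End ℂ (smoothFns (n + 1)) :=
  coordOp (Fin.last n) * coordOp (Fin.last n)
    - ∑ j ∈ tangentialIdx (n + 1), (epsSet I j : ℂ) • (coordOp j * coordOp j)

def partialLapOp (I : Finset (Fin n)) : Module.End ℂ (smoothFns n) :=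
  ∑ j ∈ I, pdOp j * pdOp j

-- Every truncated subtraction below comes with a vanishing factor `m (m - 1)`, `k` or `k (k - 1)`.
theorem derivAtZero_quadFormOp {I : Finset (Fin (n + 1))} (hI : I ⊆ tangentialIdx (n + 1))
    (m k : ℕ) (g : smoothFns (n + 1)) :
    derivAtZero m k (quadFormOp I g)
      = m * (m - 1 : ℕ) * derivAtZero (m - 2) k g
        + 2 * k * (2 * (k - 1 : ℕ) + (n - 2 * I.card)) * derivAtZero m (k - 1) g
        - 8 * k * (k - 1 : ℕ) * derivAtZero m (k - 2) (partialLapOp I g) := by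
  set B : Fin (n + 1) → ℂ := fun j => derivAtZero m (k - 2) (pdOp j (pdOp j g))
  have hεsum : ∑ j ∈ tangentialIdx (n + 1), (epsSet I j : ℂ) = 2 * I.card - n := by
    simpa [card_tangentialIdx] using sum_epsSet_mul hI (fun _ => 1)
  have hεB : ∑ j ∈ tangentialIdx (n + 1), (epsSet I j : ℂ) * B j
      = 2 * derivAtZero m (k - 2) (partialLapOp I g) - derivAtZero m (k - 2) (lapOp g) := by
    simp [sum_epsSet_mul hI, B, partialLapOp, lapOp]
  have hlap : (k * (k - 1 : ℕ) : ℂ) * derivAtZero m (k - 2) (lapOp g)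
      = k * (k - 1 : ℕ) * derivAtZero m (k - 1) g := by
    rcases k with _ | _ | k <;> simp [derivAtZero_lapOp]
  have hsq : ∀ j ∈ tangentialIdx (n + 1),
      (epsSet I j : ℂ) * derivAtZero m k (coordOp j (coordOp j g))
        = 2 * k * derivAtZero m (k - 1) g * epsSet I j
          + 4 * k * (k - 1 : ℕ) * (epsSet I j * B j) := by
    intro j hj
    rw [derivAtZero_coordOp_sq hj]
    ring
  simp only [quadFormOp, LinearMap.sub_apply, map_sub, LinearMap.sum_apply,
    map_sum, LinearMap.smul_apply, map_smul, smul_eq_mul, Module.End.mul_apply,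
    derivAtZero_coordOp_last_sq]
  rw [Finset.sum_congr rfl hsq, Finset.sum_add_distrib, ← Finset.mul_sum, ← Finset.mul_sum,
    hεsum, hεB]
  linear_combination 4 * hlap

theorem pdLast_succ (f : (Fin (n + 1) → ℝ) → ℂ) : pdLast f = pd (Fin.last n) f := by
  rw [pdLast, dif_pos n.succ_pos]
  rfl

theorem coe_pow_apply_eq_iterate {T : Module.End ℂ (smoothFns n)}
    {t : ((Fin n → ℝ) → ℂ) → (Fin n → ℝ) → ℂ}
    (hT : ∀ f, (T f : (Fin n → ℝ) → ℂ) = t f) (m : ℕ) (f : smoothFns n) :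
    ((T ^ m) f : (Fin n → ℝ) → ℂ) = t^[m] f := by
  rw [Module.End.pow_apply]
  exact (Function.Semiconj.iterate_right (f := Subtype.val) hT m f)

theorem derivAtZero_eq_iterate (m k : ℕ) (g : smoothFns (n + 1)) :
    derivAtZero m k g = pdLast^[m] (lapP^[k] (g : (Fin (n + 1) → ℝ) → ℂ)) 0 := by
  simp only [derivAtZero, LinearMap.comp_apply, Module.End.mul_apply, evalZero_apply]
  rw [coe_pow_apply_eq_iterate (t := pdLast) (fun f => (pdLast_succ _).symm),
    coe_pow_apply_eq_iterate coe_lapOp_apply]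

theorem coe_quadFormOp_apply (I : Finset (Fin (n + 1))) (g : smoothFns (n + 1)) :
    (quadFormOp I g : (Fin (n + 1) → ℝ) → ℂ)
      = fun x => ((x (Fin.last n) ^ 2 - ∑ k ∈ tangentialIdx (n + 1), epsSet I k * x k ^ 2 : ℝ)
          : ℂ) * (g : (Fin (n + 1) → ℝ) → ℂ) x := by
  ext x
  simp only [quadFormOp, LinearMap.sub_apply, LinearMap.sum_apply, LinearMap.smul_apply,
    Module.End.mul_apply, Submodule.coe_sub, Submodule.coe_sum, Submodule.coe_smul,
    coe_coordOp_apply, Pi.sub_apply, Finset.sum_apply, Pi.smul_apply, Pi.mul_apply, coord,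
    smul_eq_mul]
  push_cast
  rw [sub_mul, Finset.sum_mul]
  congr 1
  · ring
  · exact Finset.sum_congr rfl fun j _ => by ring

theorem coe_partialLapOp_apply (I : Finset (Fin n)) (g : smoothFns n) :
    (partialLapOp I g : (Fin n → ℝ) → ℂ) = fun y => ∑ k ∈ I, pd k (pd k g) y := by
  ext y
  simp [partialLapOp, LinearMap.sum_apply]

theorem prod_Ico_succ_shift (α : ℂ) (a b : ℕ) :
    ∏ m ∈ Finset.Ico (a + 1) (b + 1), (α - 1 + (m : ℂ))
      = ∏ m ∈ Finset.Ico a b, (α + (m : ℂ)) := by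
  rw [Finset.prod_Ico_eq_prod_range, Finset.prod_Ico_eq_prod_range, Nat.add_sub_add_right]
  refine Finset.prod_congr rfl fun i _ => ?_
  push_cast
  ring

theorem succ_mul_gegenCoeff_succ (α : ℂ) {L k : ℕ} (hk : k ≤ L / 2) :
    (k + 1) * gegenCoeff (α - 1) (L + 2) (k + 1) = - gegenCoeff α L k := by
  unfold gegenCoeff
  rw [show (L + 2 + 1) / 2 = (L + 1) / 2 + 1 by omega, show L + 2 - (k + 1) = L - k + 1 by omega,
    show L + 2 - 2 * (k + 1) = L - 2 * k by omega, prod_Ico_succ_shift, Nat.factorial_succ]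
  have hk! : (k.factorial : ℂ) ≠ 0 := Nat.cast_ne_zero.mpr k.factorial_ne_zero
  have hLk! : ((L - 2 * k).factorial : ℂ) ≠ 0 :=
    Nat.cast_ne_zero.mpr (L - 2 * k).factorial_ne_zero
  field_simp
  push_cast
  ring

theorem gegenCoeff_mul_descFactorial (α : ℂ) {L k : ℕ} (hk : k ≤ L / 2) :
    gegenCoeff (α - 1) (L + 2) k * ((L + 2 - 2 * k : ℕ) * (L + 2 - 2 * k - 1 : ℕ))
      = 4 * (α + L - k) * gegenCoeff α L k := by
  unfold gegenCoeff
  rw [show (L + 2 + 1) / 2 = (L + 1) / 2 + 1 by omega, show L + 2 - k = L - k + 1 + 1 by omega,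
    prod_Ico_succ_shift, Finset.prod_Ico_succ_top (show (L + 1) / 2 ≤ L - k by omega),
    show L + 2 - 2 * k = L - 2 * k + 2 by omega, show L - 2 * k + 2 - 1 = L - 2 * k + 1 by omega,
    Nat.factorial_succ (L - 2 * k + 1), Nat.factorial_succ (L - 2 * k)]
  have hk! : (k.factorial : ℂ) ≠ 0 := Nat.cast_ne_zero.mpr k.factorial_ne_zero
  have hLk! : ((L - 2 * k).factorial : ℂ) ≠ 0 :=
    Nat.cast_ne_zero.mpr (L - 2 * k).factorial_ne_zero
  have hLk2 : ((L - 2 * k : ℕ) : ℂ) + 1 + 1 ≠ 0 := by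
    exact_mod_cast Nat.succ_ne_zero (L - 2 * k + 1)
  push_cast [Nat.cast_sub (show k ≤ L by omega)]
  field_simp
  ring

def gegenSum (α : ℂ) (l : ℤ) (F : ℕ → ℕ → ℂ) : ℂ :=
  if 0 ≤ l then
    ∑ k ∈ Finset.range (l.toNat / 2 + 1),
      gegenCoeff α l.toNat k
        * ((-1 : ℂ) ^ k * ((-1 : ℂ) ^ (l.toNat - 2 * k) * F (l.toNat - 2 * k) k))
  else 0

theorem Kact_eq_gegenSum (n : ℕ) (lam : ℂ) (l : ℤ) (φ : (Fin n → ℝ) → ℂ) :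
    Kact n lam l φ
      = gegenSum (lam - ((n : ℂ) - 1) / 2) l (fun m k => pdLast^[m] (lapP^[k] φ) 0) :=
  rfl

theorem gegenSum_natCast (α : ℂ) (L : ℕ) (F : ℕ → ℕ → ℂ) :
    gegenSum α L F
      = (-1) ^ L
        * ∑ k ∈ Finset.range (L / 2 + 1), (-1) ^ k * gegenCoeff α L k * F (L - 2 * k) k := by
  rw [gegenSum, if_pos (Int.natCast_nonneg L), Int.toNat_natCast, Finset.mul_sum]
  refine Finset.sum_congr rfl fun k hk => ?_
  have hk : 2 * k ≤ L := by rw [Finset.mem_range] at hk; omega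
  have hsign : (-1 : ℂ) ^ (L - 2 * k) = (-1) ^ L := by
    conv_rhs => rw [← Nat.sub_add_cancel hk, pow_add, pow_mul]
    norm_num
  rw [hsign]
  ring

theorem gegenSum_sub_two (α : ℂ) (L : ℕ) (F : ℕ → ℕ → ℂ) :
    gegenSum α ((L : ℤ) - 2) F
      = (-1) ^ L * ∑ k ∈ Finset.range (L / 2),
          (-1) ^ k * gegenCoeff α (L - 2) k * F (L - 2 - 2 * k) k := by
  rcases Nat.lt_or_ge L 2 with hL | hL
  · rw [gegenSum, if_neg (by omega), Nat.div_eq_of_lt hL, Finset.range_zero, Finset.sum_empty,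
      mul_zero]
  · obtain ⟨M, rfl⟩ : ∃ M, L = M + 2 := ⟨L - 2, by omega⟩
    rw [show ((M + 2 : ℕ) : ℤ) - 2 = M by omega, gegenSum_natCast, Nat.add_sub_cancel,
      show (M + 2) / 2 = M / 2 + 1 by omega, pow_add]
    norm_num

theorem sum_gegenCoeff_descFactorial (α : ℂ) (L : ℕ) (A : ℕ → ℕ → ℂ) :
    ∑ k ∈ Finset.range (L / 2 + 2), (-1) ^ k * gegenCoeff (α - 1) (L + 2) k
        * ((L + 2 - 2 * k : ℕ) * (L + 2 - 2 * k - 1 : ℕ) * A (L + 2 - 2 * k - 2) k)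
      = ∑ k ∈ Finset.range (L / 2 + 1), (-1) ^ k * (4 * (α + L - k)) * gegenCoeff α L k
          * A (L - 2 * k) k := by
  rw [Finset.sum_range_succ, show L + 2 - 2 * (L / 2 + 1) - 1 = 0 by omega, Nat.cast_zero,
    mul_zero, zero_mul, mul_zero, add_zero]
  refine Finset.sum_congr rfl fun k hk => ?_
  have hk : k ≤ L / 2 := by rw [Finset.mem_range] at hk; omega
  rw [show L + 2 - 2 * k - 2 = L - 2 * k by omega, ← mul_assoc, mul_assoc _ (gegenCoeff _ _ _),
    gegenCoeff_mul_descFactorial α hk]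
  ring

theorem sum_gegenCoeff_shift_one (α d : ℂ) (L : ℕ) (A : ℕ → ℕ → ℂ) :
    ∑ k ∈ Finset.range (L / 2 + 2), (-1) ^ k * gegenCoeff (α - 1) (L + 2) k
        * (2 * k * (2 * (k - 1 : ℕ) + d) * A (L + 2 - 2 * k) (k - 1))
      = ∑ k ∈ Finset.range (L / 2 + 1), (-1) ^ k * (2 * (2 * k + d)) * gegenCoeff α L k
          * A (L - 2 * k) k := by
  rw [Finset.sum_range_succ']
  simp only [Nat.cast_zero, mul_zero, zero_mul, add_zero]
  refine Finset.sum_congr rfl fun k hk => ?_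
  have hk : k ≤ L / 2 := by rw [Finset.mem_range] at hk; omega
  have hrec := succ_mul_gegenCoeff_succ α hk
  rw [show L + 2 - 2 * (k + 1) = L - 2 * k by omega, Nat.add_sub_cancel]
  push_cast
  linear_combination (-(-1) ^ k * 2 * (2 * k + d) * A (L - 2 * k) k) * hrec

theorem sum_gegenCoeff_shift_two (α : ℂ) (L : ℕ) (B : ℕ → ℕ → ℂ) :
    ∑ k ∈ Finset.range (L / 2 + 2), (-1) ^ k * gegenCoeff (α - 1) (L + 2) k
        * (8 * k * (k - 1 : ℕ) * B (L + 2 - 2 * k) (k - 2))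
      = 8 * ∑ k ∈ Finset.range (L / 2), (-1) ^ k * gegenCoeff (α + 1) (L - 2) k
          * B (L - 2 - 2 * k) k := by
  rw [Finset.sum_range_succ', Finset.sum_range_succ', Finset.mul_sum]
  simp only [Nat.sub_self, Nat.cast_zero, mul_zero, zero_mul, add_zero]
  refine Finset.sum_congr rfl fun k hk => ?_
  rw [Finset.mem_range] at hk
  have hrec₁ := succ_mul_gegenCoeff_succ α (L := L) (k := k + 1) (by omega)
  have hrec₂ := succ_mul_gegenCoeff_succ (α + 1) (L := L - 2) (k := k) (by omega)
  rw [add_sub_cancel_right, Nat.sub_add_cancel (by omega)] at hrec₂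
  rw [show L + 2 - 2 * (k + 1 + 1) = L - 2 - 2 * k by omega, show k + 1 + 1 - 2 = k by omega,
    show k + 1 + 1 - 1 = k + 1 by omega]
  push_cast at hrec₁ hrec₂ ⊢
  linear_combination (8 * (-1) ^ k * B (L - 2 - 2 * k) k) * ((k + 1) * hrec₁ - hrec₂)

theorem gegenSum_recurrence (lam c d : ℂ) {l : ℤ} (hl : 0 ≤ l) {F A B : ℕ → ℕ → ℂ}
    (hF : ∀ m k, F m k = m * (m - 1 : ℕ) * A (m - 2) k
      + 2 * k * (2 * (k - 1 : ℕ) + d) * A m (k - 1) - 8 * k * (k - 1 : ℕ) * B m (k - 2)) :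
    gegenSum (lam - 1 - c) (l + 2) F
      = 2 * (2 * (lam - c) + 2 * l + d) * gegenSum (lam - c) l A
        - 8 * gegenSum (lam + 1 - c) (l - 2) B := by
  rw [sub_right_comm, add_sub_right_comm]
  generalize lam - c = α
  lift l to ℕ using hl with L
  have hsplit : ∑ k ∈ Finset.range (L / 2 + 2), (-1) ^ k * gegenCoeff (α - 1) (L + 2) k
        * F (L + 2 - 2 * k) k
      = ∑ k ∈ Finset.range (L / 2 + 2), (-1) ^ k * gegenCoeff (α - 1) (L + 2) k
          * ((L + 2 - 2 * k : ℕ) * (L + 2 - 2 * k - 1 : ℕ) * A (L + 2 - 2 * k - 2) k)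
        + ∑ k ∈ Finset.range (L / 2 + 2), (-1) ^ k * gegenCoeff (α - 1) (L + 2) k
          * (2 * k * (2 * (k - 1 : ℕ) + d) * A (L + 2 - 2 * k) (k - 1))
        - ∑ k ∈ Finset.range (L / 2 + 2), (-1) ^ k * gegenCoeff (α - 1) (L + 2) k
          * (8 * k * (k - 1 : ℕ) * B (L + 2 - 2 * k) (k - 2)) := by
    rw [← Finset.sum_add_distrib, ← Finset.sum_sub_distrib]
    refine Finset.sum_congr rfl fun k _ => ?_
    rw [hF]
    ring
  have hA : ∑ k ∈ Finset.range (L / 2 + 1), ((-1) ^ k * (4 * (α + L - k)) * gegenCoeff α L k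
        * A (L - 2 * k) k + (-1) ^ k * (2 * (2 * k + d)) * gegenCoeff α L k * A (L - 2 * k) k)
      = 2 * (2 * α + 2 * L + d)
          * ∑ k ∈ Finset.range (L / 2 + 1), (-1) ^ k * gegenCoeff α L k * A (L - 2 * k) k := by
    rw [Finset.mul_sum]
    refine Finset.sum_congr rfl fun k _ => ?_
    ring
  rw [show (L : ℤ) + 2 = ((L + 2 : ℕ) : ℤ) by push_cast; ring, gegenSum_natCast,
    gegenSum_natCast, gegenSum_sub_two, show (L + 2) / 2 + 1 = L / 2 + 2 by omega, hsplit,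
    sum_gegenCoeff_descFactorial, sum_gegenCoeff_shift_one, sum_gegenCoeff_shift_two,
    ← Finset.sum_add_distrib, hA]
  push_cast
  ring

end

/-- For I ⊆ {1,…,n−1} with #I = i:
`(x_n² − Σ_{k=1}^{n−1} ε_I(k) x_k²)·𝒦_{λ−1,ν+1} = 4(ν − i)·𝒦_{λ,ν} − 8(Σ_{k∈I} ∂_k²)𝒦_{λ+1,ν−1}`
as tempered distributions on ℝ^n, tested against an arbitrary Schwartz function `φ`;
`((Σ_{k∈I} ∂_k²) T)(φ) = T(Σ_{k∈I} ∂_k² φ)`. -/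
theorem stmt17 (n : ℕ) (hn : 2 ≤ n) (lam nu : ℂ) (l : ℤ) (hl : 0 ≤ l)
    (hln : nu - lam = (l : ℂ)) (i : ℕ) (I : Finset (Fin n))
    (hIsub : ∀ k ∈ I, (k : ℕ) < n - 1) (hI : I.card = i)
    (φ : SchwartzMap (Fin n → ℝ) ℂ) :
    Kact n (lam - 1) (l + 2)
        (fun x => (((x ⟨n - 1, by omega⟩) ^ 2
          - ∑ k ∈ Finset.univ.filter (fun k : Fin n => (k : ℕ) < n - 1),
              epsSet I k * (x k) ^ 2 : ℝ) : ℂ) * φ x)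
      = 4 * (nu - (i : ℂ)) * Kact n lam l ⇑φ
        - 8 * Kact n (lam + 1) (l - 2) (fun y => ∑ k ∈ I, pd k (pd k ⇑φ) y) := by
  obtain ⟨n, rfl⟩ : ∃ m, n = m + 1 := ⟨n - 1, by omega⟩
  subst hI
  have hItan : I ⊆ tangentialIdx (n + 1) := fun k hk =>
    Finset.mem_filter.mpr ⟨Finset.mem_univ _, hIsub k hk⟩
  let ψ : smoothFns (n + 1) := ⟨φ, φ.smooth ⊤⟩
  have key := gegenSum_recurrence lam ((((n + 1 : ℕ) : ℂ) - 1) / 2) (n - 2 * I.card) hl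
    (F := fun m k => derivAtZero m k (quadFormOp I ψ)) (A := fun m k => derivAtZero m k ψ)
    (B := fun m k => derivAtZero m k (partialLapOp I ψ))
    (fun m k => derivAtZero_quadFormOp hItan m k ψ)
  simp only [ψ, derivAtZero_eq_iterate, coe_quadFormOp_apply, coe_partialLapOp_apply] at key
  rw [Kact_eq_gegenSum, Kact_eq_gegenSum, Kact_eq_gegenSum,
    show 4 * (nu - I.card) = 2 * (2 * (lam - (((n + 1 : ℕ) : ℂ) - 1) / 2) + 2 * l
      + (n - 2 * I.card)) by push_cast; linear_combination 4 * hln]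
  exact key
end

section
/- Let μ ∈ ℂ and let a ≥ 2 be an integer. Then the renormalized Gegenbauer polynomials satisfy the three-term relation (μ + a)·C̃_a^μ(z) + C̃_{a−2}^{μ+1}(z) = (μ + ⌊(a+1)/2⌋)·C̃_a^{μ+1}(z) as an identity of polynomials in ℂ[z]. -/
/-- The renormalized Gegenbauer polynomial C̃_l^α as an element of ℂ[z]. -/
noncomputable def gegenPoly (α : ℂ) (l : ℕ) : Polynomial ℂ :=
  ∑ k ∈ Finset.range (l / 2 + 1), Polynomial.C (gegenCoeff α l k) * Polynomial.X ^ (l - 2 * k)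

/-
Write `c_α(l, k)` for `gegenCoeff α l k` and compare coefficients of `z^{a-2k}`. Raising the
parameter by one shifts the product `∏_{m=⌊(a+1)/2⌋}^{a-k-1} (μ + m)` by one step, which
telescopes to `(μ + ⌊(a+1)/2⌋) c_{μ+1}(a, k) = (μ + a - k) c_μ(a, k)`; and
`c_{μ+1}(a-2, k-1) = -k c_μ(a, k)`, since both carry the same product and `k! = k (k-1)!`.
The factors `μ + a - k` and `k` add up to `μ + a`.
-/

open Finset Polynomial

lemma mul_prod_Ico_comp_succ {M : Type*} [CommMonoid M] (f : ℕ → M) {b c : ℕ} (h : b ≤ c) :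
    f b * ∏ m ∈ Ico b c, f (m + 1) = f c * ∏ m ∈ Ico b c, f m := by
  rw [prod_Ico_add', ← prod_eq_prod_Ico_succ_bot (Nat.lt_succ_of_le h), prod_Ico_succ_top h,
    mul_comm]

lemma prod_Ico_add_one_add_cast (α : ℂ) (b c : ℕ) :
    ∏ m ∈ Ico b c, (α + 1 + (m : ℂ)) = ∏ m ∈ Ico b c, (α + ((m + 1 : ℕ) : ℂ)) :=
  prod_congr rfl fun m _ => by push_cast; ring

lemma add_mul_gegenCoeff_add_one (α : ℂ) {l k : ℕ} (hk : k ≤ l / 2) :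
    (α + (((l + 1) / 2 : ℕ) : ℂ)) * gegenCoeff (α + 1) l k
      = (α + l - k) * gegenCoeff α l k := by
  have htele := mul_prod_Ico_comp_succ (fun m : ℕ => α + (m : ℂ)) (by omega : (l + 1) / 2 ≤ l - k)
  rw [Nat.cast_sub (by omega : k ≤ l)] at htele
  simp only [gegenCoeff, prod_Ico_add_one_add_cast, ← mul_div_assoc]
  congr 1
  linear_combination (-1 : ℂ) ^ k * 2 ^ (l - 2 * k) * htele

lemma gegenCoeff_add_one_eq (α : ℂ) {l k : ℕ} (hk : k ≤ l) :
    gegenCoeff (α + 1) l k = -((k + 1 : ℕ) : ℂ) * gegenCoeff α (l + 2) (k + 1) := by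
  have hprod : ∏ m ∈ Ico ((l + 1) / 2) (l - k), (α + 1 + (m : ℂ))
      = ∏ m ∈ Ico ((l + 2 + 1) / 2) (l + 2 - (k + 1)), (α + (m : ℂ)) := by
    rw [prod_Ico_add_one_add_cast, prod_Ico_add' (fun m : ℕ => α + (m : ℂ)),
      show (l + 1) / 2 + 1 = (l + 2 + 1) / 2 by omega, show l - k + 1 = l + 2 - (k + 1) by omega]
  have hexp : l + 2 - 2 * (k + 1) = l - 2 * k := by omega
  simp only [gegenCoeff, hprod, hexp, Nat.factorial_succ, pow_succ]
  have := Nat.factorial_ne_zero k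
  have := Nat.factorial_ne_zero (l - 2 * k)
  field_simp
  push_cast
  ring

lemma gegenCoeff_three_term (μ : ℂ) {n k : ℕ} (hk : k ≤ n / 2) :
    (μ + ((n + 2 : ℕ) : ℂ)) * gegenCoeff μ (n + 2) (k + 1) + gegenCoeff (μ + 1) n k
      = (μ + (((n + 2 + 1) / 2 : ℕ) : ℂ)) * gegenCoeff (μ + 1) (n + 2) (k + 1) := by
  rw [add_mul_gegenCoeff_add_one μ (by omega), gegenCoeff_add_one_eq μ (by omega)]
  push_cast
  ring

lemma gegenPoly_add_two (α : ℂ) (n : ℕ) :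
    gegenPoly α (n + 2)
      = ∑ k ∈ range (n / 2 + 1), C (gegenCoeff α (n + 2) (k + 1)) * X ^ (n - 2 * k)
        + C (gegenCoeff α (n + 2) 0) * X ^ (n + 2) := by
  rw [gegenPoly, show (n + 2) / 2 + 1 = n / 2 + 1 + 1 by omega, sum_range_succ']
  congr 1
  refine sum_congr rfl fun k _ => ?_
  rw [show n + 2 - 2 * (k + 1) = n - 2 * k by omega]

/-- The three-term relation `(μ + a)·C̃_a^μ + C̃_{a−2}^{μ+1} = (μ + ⌊(a+1)/2⌋)·C̃_a^{μ+1}`. -/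
theorem stmt19 (μ : ℂ) (a : ℕ) (ha : 2 ≤ a) :
    Polynomial.C (μ + (a : ℂ)) * gegenPoly μ a + gegenPoly (μ + 1) (a - 2)
      = Polynomial.C (μ + (((a + 1) / 2 : ℕ) : ℂ)) * gegenPoly (μ + 1) a := by
  obtain ⟨n, rfl⟩ := Nat.exists_eq_add_of_le' ha
  rw [gegenPoly_add_two, gegenPoly_add_two, Nat.add_sub_cancel, gegenPoly, mul_add, mul_add,
    mul_sum, mul_sum, add_right_comm, ← sum_add_distrib]
  congr 1
  · refine sum_congr rfl fun k hk => ?_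
    simp only [← mul_assoc, ← C_mul, ← add_mul, ← C_add,
      gegenCoeff_three_term μ (Nat.lt_succ_iff.mp (mem_range.mp hk))]
  · have h0 := add_mul_gegenCoeff_add_one μ (Nat.zero_le ((n + 2) / 2))
    rw [Nat.cast_zero, sub_zero] at h0
    rw [← mul_assoc, ← mul_assoc, ← C_mul, ← C_mul, h0]
end
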